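/- Let s^F, s^M : [0,ω] × [0,T] → [0,∞) be C¹ functions with s^F(ω,t) = s^M(ω,t) = 0 for all t ∈ [0,T], and let 𝒮_t be the finite measure on 𝕊 = {F,M} × [0,ω] whose restriction to {F}×[0,ω] has Lebesgue density s^F(·,t) and whose restriction to {M}×[0,ω] has Lebesgue density s^M(·,t). Assume (𝒮_t)_{t∈[0,T]} satisfies the two-sex weak limit equation and that the maps (v,t) ↦ h_{𝒮_t}(F,v), (v,t) ↦ h_{𝒮_t}(M,v), (v,t) ↦ 𝔫^F_{𝒮_t}(v) and (v,t) ↦ 𝔫^M_{𝒮_t}(v) are continuous. Then: (i) for all (v,t) ∈ (0,ω) × (0,T), ∂_t s^F(v,t) + ∂_v s^F(v,t) = −h_{𝒮_t}(F,v) s^F(v,t) and ∂_t s^M(v,t) + ∂_v s^M(v,t) = −h_{𝒮_t}(M,v) s^M(v,t); (ii) for all t ∈ (0,T), s^F(0,t) = ∫₀^ω 𝔫^F_{𝒮_t}(v) s^F(v,t) dv and s^M(0,t) = ∫₀^ω 𝔫^M_{𝒮_t}(v) s^F(v,t) dv. -/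

import Mathlib

open MeasureTheory Set
open scoped Topology ENNReal NNReal

namespace TwoSex

/-- The two-sex state space `𝕊 = {F, M} × [0, ω]`, with `0 = F` (female) and `1 = M`
(male). -/
abbrev SS (ω : ℝ) : Type := Fin 2 × (Icc (0:ℝ) ω)

/-- The age `0` as an element of `[0, ω]`. -/
def ageZero {ω : ℝ} (hω : 0 ≤ ω) : Icc (0:ℝ) ω := ⟨0, Set.left_mem_Icc.mpr hω⟩

/-- `f'` is the age derivative of `f : 𝕊 → ℝ` (derivative in the second, continuous
variable, taken within `[0, ω]`). -/
def IsAgeDeriv {ω : ℝ} (hω : 0 ≤ ω) (f f' : SS ω → ℝ) : Prop :=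
  ∀ (i : Fin 2) (v : Icc (0:ℝ) ω),
    HasDerivWithinAt (fun x : ℝ => f (i, projIcc 0 ω hω x)) (f' (i, v)) (Icc 0 ω) (v : ℝ)

/-- The birth intensity `n^i_μ` on `𝕊` built from `𝔫^F_μ, 𝔫^M_μ`: it is attached to
females only, i.e. `n^i_μ(F,v) = 𝔫^i_μ(v)` and `n^i_μ(M,v) = 0`. -/
noncomputable def nfun {ω : ℝ} (nF nM : Measure (SS ω) → Icc (0:ℝ) ω → ℝ)
    (i : Fin 2) (μ : Measure (SS ω)) (s : SS ω) : ℝ :=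
  if s.1 = 0 then (if i = 0 then nF μ s.2 else nM μ s.2) else 0

/-- The measure on `[0, ω]` with Lebesgue density `g`. -/
noncomputable def densityMeasure (ω : ℝ) (g : ℝ → ℝ) : Measure (Icc (0:ℝ) ω) :=
  Measure.comap Subtype.val
    ((volume : Measure ℝ).withDensity fun v => ENNReal.ofReal (g v))

/-- `(S_t)_{t∈[0,T]}` satisfies the two-sex weak limit equation: for every `f ∈ C¹(𝕊)` and
`t ∈ [0,T]`, `u ↦ (f′ − h_{S_u} f + Σ_i f(i,0) n^i_{S_u}, S_u)` is integrable on `[0,t]` and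
`(f, S_t) = (f, S_0) + ∫₀ᵗ (f′ − h_{S_u} f + Σ_i f(i,0) n^i_{S_u}, S_u) du`. -/
def TwoSexWeakEq {ω : ℝ} (hω : 0 ≤ ω) (T : ℝ)
    (h : Measure (SS ω) → SS ω → ℝ)
    (nF nM : Measure (SS ω) → Icc (0:ℝ) ω → ℝ)
    (S : ℝ → Measure (SS ω)) : Prop :=
  ∀ f f' : SS ω → ℝ, Continuous f → Continuous f' → IsAgeDeriv hω f f' →
    ∀ t ∈ Icc (0:ℝ) T,
      IntervalIntegrable (fun u => ∫ s,
          (f' s - h (S u) s * f s +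
            ∑ i : Fin 2, f (i, ageZero hω) * nfun nF nM i (S u) s) ∂(S u)) volume 0 t ∧
      (∫ s, f s ∂(S t)) = (∫ s, f s ∂(S 0)) +
        ∫ u in (0:ℝ)..t, ∫ s,
          (f' s - h (S u) s * f s +
            ∑ i : Fin 2, f (i, ageZero hω) * nfun nF nM i (S u) s) ∂(S u)

lemma densityMeasure_integral {ω : ℝ} (hω : 0 < ω) (g : ℝ → ℝ)
    (hg : ContinuousOn g (Icc 0 ω)) (hg0 : ∀ v ∈ Icc (0:ℝ) ω, 0 ≤ g v)
    (G : Icc (0:ℝ) ω → ℝ)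
    (hGm : AEStronglyMeasurable (fun v : ℝ => G (projIcc 0 ω hω.le v))
      (volume.restrict (Icc 0 ω)))
    (C : ℝ) (hGb : ∀ x, |G x| ≤ C) :
    Integrable G (densityMeasure ω g) ∧
    ∫ x, G x ∂(densityMeasure ω g) =
      ∫ v in (0:ℝ)..ω, G (projIcc 0 ω hω.le v) * g v := by
  classical
  have hval : MeasurableEmbedding (Subtype.val : Icc (0:ℝ) ω → ℝ) :=
    MeasurableEmbedding.subtype_coe measurableSet_Icc
  set Gext : ℝ → ℝ := fun v => G (projIcc 0 ω hω.le v) with hGext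
  have hGG : G = fun x => Gext (Subtype.val x) := by
    funext x; simp [hGext, projIcc_val]
  set μ0 : Measure ℝ := (volume : Measure ℝ).withDensity fun v => ENNReal.ofReal (g v) with hμ0
  have hmapcomap : (Measure.comap (Subtype.val : Icc (0:ℝ) ω → ℝ) μ0).map (Subtype.val : Icc (0:ℝ) ω → ℝ) = μ0.restrict (Icc 0 ω) := by
    rw [show μ0.restrict (Icc 0 ω) = μ0.restrict (range (Subtype.val : Icc (0:ℝ) ω → ℝ)) by rw [Subtype.range_coe], ← hval.map_comap]
  have hrw : μ0.restrict (Icc 0 ω)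
      = ((volume : Measure ℝ).restrict (Icc 0 ω)).withDensity
          fun v => ((g v).toNNReal : ℝ≥0∞) := by
    rw [hμ0, restrict_withDensity measurableSet_Icc]
    rfl
  have hgae : AEMeasurable (fun v => (g v).toNNReal) ((volume : Measure ℝ).restrict (Icc 0 ω)) :=
    measurable_real_toNNReal.comp_aemeasurable (hg.aemeasurable measurableSet_Icc)
  -- integrability of the smul function
  obtain ⟨D, hD⟩ : ∃ D, ∀ v ∈ Icc (0:ℝ) ω, ‖g v‖ ≤ D :=
    isCompact_Icc.exists_bound_of_continuousOn hg
  have hCnn : 0 ≤ C := le_trans (abs_nonneg _) (hGb ⟨0, left_mem_Icc.mpr hω.le⟩)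
  have hint : Integrable (fun v => ((g v).toNNReal : ℝ) • Gext v)
      ((volume : Measure ℝ).restrict (Icc 0 ω)) := by
    refine Integrable.mono' (integrable_const (D * C)) ?_ ?_
    · exact (hgae.coe_nnreal_real.aestronglyMeasurable).mul hGm
    · refine (ae_restrict_iff' measurableSet_Icc).2 (Filter.Eventually.of_forall fun v hv => ?_)
      have h1 : ((g v).toNNReal : ℝ) = g v := Real.coe_toNNReal _ (hg0 v hv)
      rw [smul_eq_mul, norm_mul, h1]
      exact mul_le_mul (hD v hv) (hGb _) (norm_nonneg _)
        (le_trans (norm_nonneg _) (hD v hv))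
  have hintG : Integrable Gext (μ0.restrict (Icc 0 ω)) := by
    rw [hrw]
    exact (integrable_withDensity_iff_integrable_coe_smul₀ hgae).2 hint
  constructor
  · rw [hGG, densityMeasure, ← hμ0]
    have h2 : Integrable (Gext ∘ (Subtype.val : Icc (0:ℝ) ω → ℝ)) (Measure.comap Subtype.val μ0) :=
      hval.integrable_map_iff.mp (by rw [hmapcomap]; exact hintG)
    exact h2
  · calc ∫ x, G x ∂(densityMeasure ω g)
        = ∫ x, Gext (Subtype.val x) ∂(Measure.comap Subtype.val μ0) := by
          rw [densityMeasure, ← hμ0, ← hGG]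
      _ = ∫ v, Gext v ∂((Measure.comap Subtype.val μ0).map Subtype.val) :=
          (hval.integral_map _).symm
      _ = ∫ v, Gext v ∂(μ0.restrict (Icc 0 ω)) := by rw [hmapcomap]
      _ = ∫ v in Icc (0:ℝ) ω, ((g v).toNNReal : ℝ) • Gext v := by
          rw [hrw]; exact integral_withDensity_eq_integral_smul₀ hgae _
      _ = ∫ v in Icc (0:ℝ) ω, Gext v * g v := by
          refine setIntegral_congr_fun measurableSet_Icc fun v hv => ?_
          rw [smul_eq_mul, Real.coe_toNNReal _ (hg0 v hv), mul_comm]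
      _ = ∫ v in (0:ℝ)..ω, Gext v * g v := by
          rw [intervalIntegral.integral_of_le hω.le, integral_Icc_eq_integral_Ioc]

lemma SS_integral {ω : ℝ} (hω : 0 < ω) (gF gM : ℝ → ℝ)
    (hgF : ContinuousOn gF (Icc 0 ω)) (hgF0 : ∀ v ∈ Icc (0:ℝ) ω, 0 ≤ gF v)
    (hgM : ContinuousOn gM (Icc 0 ω)) (hgM0 : ∀ v ∈ Icc (0:ℝ) ω, 0 ≤ gM v)
    (G : SS ω → ℝ)
    (hGm : ∀ i : Fin 2, AEStronglyMeasurable (fun v : ℝ => G (i, projIcc 0 ω hω.le v))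
      (volume.restrict (Icc 0 ω)))
    (C : ℝ) (hGb : ∀ s, |G s| ≤ C) :
    Integrable G ((densityMeasure ω gF).map (fun v => ((0 : Fin 2), v)) +
      (densityMeasure ω gM).map (fun v => ((1 : Fin 2), v))) ∧
    ∫ s, G s ∂((densityMeasure ω gF).map (fun v => ((0 : Fin 2), v)) +
      (densityMeasure ω gM).map (fun v => ((1 : Fin 2), v))) =
      (∫ v in (0:ℝ)..ω, G (0, projIcc 0 ω hω.le v) * gF v) +
      ∫ v in (0:ℝ)..ω, G (1, projIcc 0 ω hω.le v) * gM v := by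
  have e0 : MeasurableEmbedding (Prod.mk (0 : Fin 2) : Icc (0:ℝ) ω → SS ω) :=
    measurableEmbedding_prodMk_left 0
  have e1 : MeasurableEmbedding (Prod.mk (1 : Fin 2) : Icc (0:ℝ) ω → SS ω) :=
    measurableEmbedding_prodMk_left 1
  have hF := densityMeasure_integral hω gF hgF hgF0 (fun x => G (0, x)) (hGm 0) C (fun x => hGb _)
  have hM := densityMeasure_integral hω gM hgM hgM0 (fun x => G (1, x)) (hGm 1) C (fun x => hGb _)
  have iF : Integrable G ((densityMeasure ω gF).map (fun v => ((0 : Fin 2), v))) := by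
    rw [show (fun v : Icc (0:ℝ) ω => ((0 : Fin 2), v)) = Prod.mk (0 : Fin 2) from rfl,
      e0.integrable_map_iff]
    exact hF.1
  have iM : Integrable G ((densityMeasure ω gM).map (fun v => ((1 : Fin 2), v))) := by
    rw [show (fun v : Icc (0:ℝ) ω => ((1 : Fin 2), v)) = Prod.mk (1 : Fin 2) from rfl,
      e1.integrable_map_iff]
    exact hM.1
  refine ⟨Integrable.add_measure iF iM, ?_⟩
  rw [integral_add_measure iF iM]
  rw [show (fun v : Icc (0:ℝ) ω => ((0 : Fin 2), v)) = Prod.mk (0 : Fin 2) from rfl,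
    show (fun v : Icc (0:ℝ) ω => ((1 : Fin 2), v)) = Prod.mk (1 : Fin 2) from rfl,
    e0.integral_map, e1.integral_map]
  rw [← hF.2, ← hM.2]

lemma contOn_param {ω T : ℝ} (hω : 0 < ω) (Φ : ℝ → ℝ → ℝ)
    (hΦ : ContinuousOn (Function.uncurry Φ) (Icc 0 ω ×ˢ Icc 0 T)) :
    ContinuousOn (fun u => ∫ v in (0:ℝ)..ω, Φ v u) (Icc 0 T) := by
  obtain ⟨C, hC⟩ := ((isCompact_Icc.prod isCompact_Icc).exists_bound_of_continuousOn hΦ)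
  have hslicev : ∀ u ∈ Icc (0:ℝ) T, ContinuousOn (fun v => Φ v u) (Icc 0 ω) := by
    intro u hu
    exact hΦ.comp ((continuous_id.prodMk continuous_const).continuousOn)
      (fun v hv => mk_mem_prod hv hu)
  intro u₀ hu₀
  apply intervalIntegral.continuousWithinAt_of_dominated_interval (bound := fun _ => C)
  · filter_upwards [self_mem_nhdsWithin] with u hu
    exact ((hslicev u hu).mono (by rw [uIoc_of_le hω.le]; exact Ioc_subset_Icc_self)
      ).aestronglyMeasurable measurableSet_uIoc
  · filter_upwards [self_mem_nhdsWithin] with u hu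
    refine Filter.Eventually.of_forall fun v hv => ?_
    refine hC (v, u) (mk_mem_prod ?_ hu)
    rw [uIoc_of_le hω.le] at hv; exact Ioc_subset_Icc_self hv
  · exact intervalIntegrable_const
  · refine Filter.Eventually.of_forall fun v hv => ?_
    rw [uIoc_of_le hω.le] at hv
    exact (hΦ.comp ((continuous_const.prodMk continuous_id).continuousOn)
      (fun u hu => mk_mem_prod (Ioc_subset_Icc_self hv) hu)) u₀ hu₀

lemma vanish_of_integral_smooth_eq_zero {ω : ℝ} (hω : 0 < ω) (A : ℝ → ℝ)
    (hA : ContinuousOn A (Icc 0 ω))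
    (hzero : ∀ φ : ℝ → ℝ, ContDiff ℝ 1 φ → (∀ v, 0 ≤ φ v) → tsupport φ ⊆ Ioo 0 ω →
      (∫ v in (0:ℝ)..ω, φ v * A v) = 0) :
    ∀ v₀ ∈ Ioo (0:ℝ) ω, A v₀ = 0 := by
  intro v₀ hv₀
  by_contra hne
  set ε := |A v₀| with hε
  have hεpos : 0 < ε := abs_pos.mpr hne
  have hca : ContinuousAt A v₀ :=
    hA.continuousAt (Icc_mem_nhds hv₀.1 hv₀.2)
  obtain ⟨δ, hδpos, hδ⟩ := Metric.continuousAt_iff.mp hca (ε/2) (by positivity)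
  set r := min δ (min v₀ (ω - v₀)) / 2 with hr
  have hrpos : 0 < r := by
    have h1 : 0 < v₀ := hv₀.1
    have h2 : 0 < ω - v₀ := by linarith [hv₀.2]
    positivity
  have hrδ : r < δ := by
    have := min_le_left δ (min v₀ (ω - v₀)); rw [hr]; linarith
  have hrv₀ : r < v₀ := by
    have h1 := min_le_right δ (min v₀ (ω - v₀))
    have h2 := min_le_left v₀ (ω - v₀)
    have h3 : 0 < v₀ := hv₀.1
    rw [hr]; nlinarith [le_trans h1 h2]
  have hrω : r < ω - v₀ := by
    have h1 := min_le_right δ (min v₀ (ω - v₀))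
    have h2 := min_le_right v₀ (ω - v₀)
    have h3 : 0 < ω - v₀ := by linarith [hv₀.2]
    rw [hr]; nlinarith [le_trans h1 h2]
  -- sign analysis on the closed ball
  set sgn : ℝ := if 0 < A v₀ then 1 else -1 with hsgn
  have hsign : ∀ v ∈ Metric.closedBall v₀ r, ε / 2 ≤ sgn * A v := by
    intro v hv
    have hd : dist v v₀ < δ := lt_of_le_of_lt (Metric.mem_closedBall.mp hv) hrδ
    have h2 := hδ hd
    rw [Real.dist_eq] at h2
    have hsA : sgn * A v₀ = ε := by
      rw [hsgn, hε]; rcases lt_trichotomy (A v₀) 0 with h|h|h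
      · rw [if_neg (by linarith), abs_of_neg h]; ring
      · exact absurd h hne
      · rw [if_pos h, abs_of_pos h]; ring
    have : |sgn * A v - sgn * A v₀| < ε / 2 := by
      rw [← mul_sub, abs_mul]
      have : |sgn| = 1 := by rw [hsgn]; split <;> simp
      rw [this, one_mul]; exact h2
    have := abs_lt.mp this
    linarith [hsA ▸ this.1]
  set c : ContDiffBump v₀ := ⟨r/2, r, by positivity, by linarith⟩ with hc
  set φ : ℝ → ℝ := fun x => c x with hφ
  have hsupp : tsupport φ ⊆ Ioo 0 ω := by
    rw [hφ]
    rw [c.tsupport_eq]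
    intro x hx
    have := Metric.mem_closedBall.mp hx
    rw [Real.dist_eq] at this
    have := abs_le.mp this
    constructor <;> [linarith; linarith]
  have hzero' := hzero φ (c.contDiff (n := 1)) c.nonneg' hsupp
  -- B := sgn * (φ * A) is nonneg on Icc 0 ω, positive near v₀
  set B : ℝ → ℝ := fun v => sgn * (φ v * A v) with hB
  have hBnonneg : ∀ v, 0 ≤ B v := by
    intro v
    rcases eq_or_ne (φ v) 0 with h|h
    · simp [hB, h]
    · have hv : v ∈ Metric.closedBall v₀ r := by
        rw [← c.tsupport_eq]; exact subset_tsupport φ h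
      have h1 : 0 < φ v := lt_of_le_of_ne (c.nonneg' v) (Ne.symm h)
      have h2 : 0 < sgn * A v := lt_of_lt_of_le (by positivity) (hsign v hv)
      rw [hB]
      calc (0:ℝ) ≤ φ v * (sgn * A v) := le_of_lt (by positivity)
        _ = sgn * (φ v * A v) := by ring
  have hBcont : ContinuousOn B (Icc 0 ω) :=
    (continuousOn_const.mul (((c.contDiff (n := 1)).continuous.continuousOn).mul hA))
  have hBii : ∀ a b, a ∈ Icc (0:ℝ) ω → b ∈ Icc (0:ℝ) ω → IntervalIntegrable B volume a b := by
    intro a b ha hb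
    exact (hBcont.mono (uIcc_subset_Icc ha hb)).intervalIntegrable
  set a := v₀ - r/2 with ha
  set b := v₀ + r/2 with hb2
  have haI : a ∈ Icc (0:ℝ) ω := ⟨by rw [ha]; linarith, by rw [ha]; linarith⟩
  have hbI : b ∈ Icc (0:ℝ) ω := ⟨by rw [hb2]; linarith, by rw [hb2]; linarith⟩
  have h0I : (0:ℝ) ∈ Icc (0:ℝ) ω := left_mem_Icc.mpr hω.le
  have hωI : ω ∈ Icc (0:ℝ) ω := right_mem_Icc.mpr hω.le
  have hsplit : (∫ v in (0:ℝ)..ω, B v) =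
      (∫ v in (0:ℝ)..a, B v) + ((∫ v in a..b, B v) + ∫ v in b..ω, B v) := by
    rw [intervalIntegral.integral_add_adjacent_intervals (hBii a b haI hbI) (hBii b ω hbI hωI),
      intervalIntegral.integral_add_adjacent_intervals (hBii 0 a h0I haI) (hBii a ω haI hωI)]
  have hmid : 0 < ∫ v in a..b, B v := by
    refine intervalIntegral.intervalIntegral_pos_of_pos_on (hBii a b haI hbI) ?_ (by rw [ha, hb2]; linarith)
    intro x hx
    have hxb : x ∈ Metric.ball v₀ r := by
      rw [Metric.mem_ball, Real.dist_eq, abs_lt]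
      constructor <;> [rw [ha] at hx; rw [hb2] at hx] <;>
        [linarith [hx.1]; linarith [hx.2]]
    have h1 : 0 < φ x := c.pos_of_mem_ball hxb
    have h2 : 0 < sgn * A x := lt_of_lt_of_le (by positivity)
      (hsign x (Metric.ball_subset_closedBall hxb))
    calc (0:ℝ) < φ x * (sgn * A x) := by positivity
      _ = B x := by rw [hB]; ring
  have hleft : 0 ≤ ∫ v in (0:ℝ)..a, B v :=
    intervalIntegral.integral_nonneg haI.1 (fun u _ => hBnonneg u)
  have hright : 0 ≤ ∫ v in b..ω, B v :=
    intervalIntegral.integral_nonneg hbI.2 (fun u _ => hBnonneg u)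
  have : (∫ v in (0:ℝ)..ω, B v) = 0 := by
    rw [hB]
    simp only [intervalIntegral.integral_const_mul]
    rw [hzero', mul_zero]
  rw [hsplit] at this
  linarith

set_option maxHeartbeats 1000000 in
/-- If the two-sex population measure has C¹ age densities `s^F(·,t)`,
`s^M(·,t)` vanishing at the maximal age and satisfies the two-sex weak limit equation, and
the demographic rates are continuous along the solution, then the densities solve the
McKendrick–von Foerster equations with the corresponding boundary (renewal) conditions. -/
theorem twoSex_densities_solve_mcKendrick_vonFoerster
    (T ω : ℝ) (hT : 0 < T) (hω : 0 < ω)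
    -- demographic parameters: death rate `h`, mean offspring intensities `𝔫^F, 𝔫^M`
    (h : Measure (SS ω) → SS ω → ℝ)
    (nF nM : Measure (SS ω) → Icc (0:ℝ) ω → ℝ)
    (hmeas : ∀ μ, Measurable (h μ))
    (nFmeas : ∀ μ, Measurable (nF μ)) (nMmeas : ∀ μ, Measurable (nM μ))
    (hnonneg : ∀ μ s, 0 ≤ h μ s) (nFnonneg : ∀ μ v, 0 ≤ nF μ v)
    (nMnonneg : ∀ μ v, 0 ≤ nM μ v)
    (hbdd : ∀ μ, ∃ C, ∀ s, h μ s ≤ C)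
    (nFbdd : ∀ μ, ∃ C, ∀ v, nF μ v ≤ C) (nMbdd : ∀ μ, ∃ C, ∀ v, nM μ v ≤ C)
    -- the densities `s^F, s^M : [0,ω] × [0,T] → [0,∞)`, C¹ with partial derivatives
    -- `sFv, sFt` (resp. `sMv, sMt`) in the age and time variables
    (sF sM sFv sFt sMv sMt : ℝ → ℝ → ℝ)
    (hsF_cont : ContinuousOn (Function.uncurry sF) (Icc 0 ω ×ˢ Icc 0 T))
    (hsM_cont : ContinuousOn (Function.uncurry sM) (Icc 0 ω ×ˢ Icc 0 T))
    (hsFv_cont : ContinuousOn (Function.uncurry sFv) (Icc 0 ω ×ˢ Icc 0 T))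
    (hsFt_cont : ContinuousOn (Function.uncurry sFt) (Icc 0 ω ×ˢ Icc 0 T))
    (hsMv_cont : ContinuousOn (Function.uncurry sMv) (Icc 0 ω ×ˢ Icc 0 T))
    (hsMt_cont : ContinuousOn (Function.uncurry sMt) (Icc 0 ω ×ˢ Icc 0 T))
    (hsFv : ∀ v ∈ Icc (0:ℝ) ω, ∀ t ∈ Icc (0:ℝ) T,
      HasDerivWithinAt (fun x : ℝ => sF x t) (sFv v t) (Icc 0 ω) v)
    (hsFt : ∀ v ∈ Icc (0:ℝ) ω, ∀ t ∈ Icc (0:ℝ) T,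
      HasDerivWithinAt (fun x : ℝ => sF v x) (sFt v t) (Icc 0 T) t)
    (hsMv : ∀ v ∈ Icc (0:ℝ) ω, ∀ t ∈ Icc (0:ℝ) T,
      HasDerivWithinAt (fun x : ℝ => sM x t) (sMv v t) (Icc 0 ω) v)
    (hsMt : ∀ v ∈ Icc (0:ℝ) ω, ∀ t ∈ Icc (0:ℝ) T,
      HasDerivWithinAt (fun x : ℝ => sM v x) (sMt v t) (Icc 0 T) t)
    (hsF_nonneg : ∀ v ∈ Icc (0:ℝ) ω, ∀ t ∈ Icc (0:ℝ) T, 0 ≤ sF v t)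
    (hsM_nonneg : ∀ v ∈ Icc (0:ℝ) ω, ∀ t ∈ Icc (0:ℝ) T, 0 ≤ sM v t)
    (hsF_top : ∀ t ∈ Icc (0:ℝ) T, sF ω t = 0)
    (hsM_top : ∀ t ∈ Icc (0:ℝ) T, sM ω t = 0)
    -- the measure `S_t` has densities `s^F(·,t)` on `{F}×[0,ω]` and `s^M(·,t)` on
    -- `{M}×[0,ω]`
    (S : ℝ → Measure (SS ω))
    (hSdens : ∀ t ∈ Icc (0:ℝ) T,
      S t = (densityMeasure ω fun v => sF v t).map (fun v => ((0 : Fin 2), v)) +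
            (densityMeasure ω fun v => sM v t).map (fun v => ((1 : Fin 2), v)))
    -- `(S_t)` satisfies the two-sex weak limit equation
    (hSweak : TwoSexWeakEq hω.le T h nF nM S)
    -- continuity of the rates along the solution
    (hh_cont : ∀ i : Fin 2,
      ContinuousOn (fun p : Icc (0:ℝ) ω × ℝ => h (S p.2) (i, p.1)) (univ ×ˢ Icc 0 T))
    (hnF_cont : ContinuousOn (fun p : Icc (0:ℝ) ω × ℝ => nF (S p.2) p.1) (univ ×ˢ Icc 0 T))
    (hnM_cont : ContinuousOn (fun p : Icc (0:ℝ) ω × ℝ => nM (S p.2) p.1) (univ ×ˢ Icc 0 T)) :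
    -- (i) the transport equations in the interior
    (∀ v ∈ Ioo (0:ℝ) ω, ∀ t ∈ Ioo (0:ℝ) T,
      sFt v t + sFv v t = -(h (S t) ((0 : Fin 2), projIcc 0 ω hω.le v)) * sF v t ∧
      sMt v t + sMv v t = -(h (S t) ((1 : Fin 2), projIcc 0 ω hω.le v)) * sM v t) ∧
    -- (ii) the renewal boundary conditions
    (∀ t ∈ Ioo (0:ℝ) T,
      sF 0 t = (∫ v in (0:ℝ)..ω, nF (S t) (projIcc 0 ω hω.le v) * sF v t) ∧
      sM 0 t = ∫ v in (0:ℝ)..ω, nM (S t) (projIcc 0 ω hω.le v) * sF v t) := by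
  classical
  set pr : ℝ → Icc (0:ℝ) ω := projIcc 0 ω hω.le with hprdef
  have hprmem : ∀ v ∈ Icc (0:ℝ) ω, ((pr v : ℝ)) = v := fun v hv => by
    rw [hprdef, projIcc_of_mem hω.le hv]
  have hprm : Measurable pr := continuous_projIcc.measurable
  have hIccsub : uIcc (0:ℝ) ω ⊆ Icc 0 ω := by rw [uIcc_of_le hω.le]
  have II : ∀ F : ℝ → ℝ, ContinuousOn F (Icc 0 ω) → IntervalIntegrable F volume 0 ω :=
    fun F hF => (hF.mono hIccsub).intervalIntegrable
  -- slices of the densities and their derivatives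
  have hsl : ∀ g : ℝ → ℝ → ℝ, ContinuousOn (Function.uncurry g) (Icc 0 ω ×ˢ Icc 0 T) →
      ∀ t ∈ Icc (0:ℝ) T, ContinuousOn (fun v => g v t) (Icc 0 ω) := by
    intro g hg t ht
    exact hg.comp ((continuous_id.prodMk continuous_const).continuousOn)
      (fun v hv => mk_mem_prod hv ht)
  have hsFsl := hsl sF hsF_cont
  have hsMsl := hsl sM hsM_cont
  have hsFvsl := hsl sFv hsFv_cont
  have hsFtsl := hsl sFt hsFt_cont
  have hsMvsl := hsl sMv hsMv_cont
  have hsMtsl := hsl sMt hsMt_cont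
  -- the rates as jointly continuous functions of (v, u) ∈ ℝ × ℝ
  have hq : Continuous (fun p : ℝ × ℝ => ((pr p.1 : Icc (0:ℝ) ω), p.2)) :=
    (continuous_projIcc.comp continuous_fst).prodMk continuous_snd
  have hqmaps : MapsTo (fun p : ℝ × ℝ => ((pr p.1 : Icc (0:ℝ) ω), p.2))
      (Icc 0 ω ×ˢ Icc 0 T) ((univ : Set (Icc (0:ℝ) ω)) ×ˢ Icc 0 T) :=
    fun p hp => mk_mem_prod (mem_univ _) hp.2
  have hFfc : ContinuousOn (fun p : ℝ × ℝ => h (S p.2) (0, pr p.1)) (Icc 0 ω ×ˢ Icc 0 T) :=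
    (hh_cont 0).comp hq.continuousOn hqmaps
  have hMfc : ContinuousOn (fun p : ℝ × ℝ => h (S p.2) (1, pr p.1)) (Icc 0 ω ×ˢ Icc 0 T) :=
    (hh_cont 1).comp hq.continuousOn hqmaps
  have nFfc : ContinuousOn (fun p : ℝ × ℝ => nF (S p.2) (pr p.1)) (Icc 0 ω ×ˢ Icc 0 T) :=
    hnF_cont.comp hq.continuousOn hqmaps
  have nMfc : ContinuousOn (fun p : ℝ × ℝ => nM (S p.2) (pr p.1)) (Icc 0 ω ×ˢ Icc 0 T) :=
    hnM_cont.comp hq.continuousOn hqmaps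
  -- slices in v of the rates at fixed time
  have hslr : ∀ r : ℝ × ℝ → ℝ, ContinuousOn r (Icc 0 ω ×ˢ Icc 0 T) →
      ∀ t ∈ Icc (0:ℝ) T, ContinuousOn (fun v => r (v, t)) (Icc 0 ω) := by
    intro r hr t ht
    exact hr.comp ((continuous_id.prodMk continuous_const).continuousOn)
      (fun v hv => mk_mem_prod hv ht)
  have hFsl := hslr _ hFfc
  have hMsl := hslr _ hMfc
  have nFsl := hslr _ nFfc
  have nMsl := hslr _ nMfc
  -- integrals against S u
  have hSint : ∀ u ∈ Icc (0:ℝ) T, ∀ G : SS ω → ℝ, Measurable G → ∀ C : ℝ, (∀ s, |G s| ≤ C) →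
      Integrable G (S u) ∧ ∫ s, G s ∂(S u) =
        (∫ v in (0:ℝ)..ω, G (0, pr v) * sF v u) + ∫ v in (0:ℝ)..ω, G (1, pr v) * sM v u := by
    intro u hu G hGm C hGb
    rw [hSdens u hu]
    exact SS_integral hω (fun v => sF v u) (fun v => sM v u) (hsFsl u hu)
      (fun v hv => hsF_nonneg v hv u hu) (hsMsl u hu) (fun v hv => hsM_nonneg v hv u hu) G
      (fun i => ((hGm.comp (measurable_const.prodMk hprm)).aestronglyMeasurable))
      C hGb
  -- the master weak identity, differentiated in time
  have master : ∀ ind : Fin 2 → ℝ, ∀ φ : ℝ → ℝ, ContDiff ℝ 1 φ → ∀ t₀ ∈ Ioo (0:ℝ) T,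
      (∫ v in (0:ℝ)..ω, φ v * (ind 0 * sFt v t₀ + ind 1 * sMt v t₀)) =
        (∫ v in (0:ℝ)..ω, (ind 0 * deriv φ v - h (S t₀) (0, pr v) * (ind 0 * φ v)
            + φ 0 * (ind 0 * nF (S t₀) (pr v) + ind 1 * nM (S t₀) (pr v))) * sF v t₀)
        + ∫ v in (0:ℝ)..ω, (ind 1 * deriv φ v - h (S t₀) (1, pr v) * (ind 1 * φ v)) * sM v t₀ := by
    intro ind φ hφ t₀ ht₀
    have ht₀I : t₀ ∈ Icc (0:ℝ) T := Ioo_subset_Icc_self ht₀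
    have hφc : Continuous φ := hφ.continuous
    have hφ'c : Continuous (deriv φ) := hφ.continuous_deriv le_rfl
    have hindc : Continuous (fun s : SS ω => ind s.1) :=
      continuous_of_discreteTopology.comp continuous_fst
    set f0 : SS ω → ℝ := fun s => ind s.1 * φ (s.2 : ℝ) with hf0
    set f0' : SS ω → ℝ := fun s => ind s.1 * deriv φ (s.2 : ℝ) with hf0'
    have hc : Continuous f0 :=
      hindc.mul (hφc.comp (continuous_subtype_val.comp continuous_snd))
    have hc' : Continuous f0' :=
      hindc.mul (hφ'c.comp (continuous_subtype_val.comp continuous_snd))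
    have had : IsAgeDeriv hω.le f0 f0' := by
      intro i v
      have h1 : HasDerivWithinAt (fun x : ℝ => φ x) (deriv φ (v:ℝ)) (Icc 0 ω) (v:ℝ) :=
        ((hφ.differentiable one_ne_zero) _).hasDerivAt.hasDerivWithinAt
      have h2 : HasDerivWithinAt (fun x : ℝ => φ ((pr x : ℝ))) (deriv φ (v:ℝ)) (Icc 0 ω) (v:ℝ) :=
        h1.congr (fun x hx => by rw [hprmem x hx]) (by rw [hprmem _ v.2])
      have h3 := h2.const_mul (ind i)
      simpa [hf0, hf0', hprdef] using h3
    -- bounds for φ and deriv φ on [0, ω]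
    obtain ⟨Cφ, hCφ⟩ := isCompact_Icc.exists_bound_of_continuousOn
      (hφc.continuousOn : ContinuousOn φ (Icc 0 ω))
    obtain ⟨Cφ', hCφ'⟩ := isCompact_Icc.exists_bound_of_continuousOn
      (hφ'c.continuousOn : ContinuousOn (deriv φ) (Icc 0 ω))
    have hCφ0 : 0 ≤ Cφ := le_trans (norm_nonneg _) (hCφ 0 (left_mem_Icc.mpr hω.le))
    have hCφ'0 : 0 ≤ Cφ' := le_trans (norm_nonneg _) (hCφ' 0 (left_mem_Icc.mpr hω.le))
    set I : ℝ := |ind 0| + |ind 1| with hI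
    have hIabs : ∀ i : Fin 2, |ind i| ≤ I := by
      intro i
      fin_cases i
      · exact le_add_of_nonneg_right (abs_nonneg _)
      · exact le_add_of_nonneg_left (abs_nonneg _)
    have hI0 : 0 ≤ I := le_trans (abs_nonneg _) (hIabs 0)
    have hf0b : ∀ s : SS ω, |f0 s| ≤ I * Cφ := by
      intro s
      rw [hf0, abs_mul]
      exact mul_le_mul (hIabs s.1) (hCφ _ s.2.2) (abs_nonneg _) hI0
    have hf0'b : ∀ s : SS ω, |f0' s| ≤ I * Cφ' := by
      intro s
      rw [hf0', abs_mul]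
      exact mul_le_mul (hIabs s.1) (hCφ' _ s.2.2) (abs_nonneg _) hI0
    -- the weak-equation integrand
    have hW0 : ∀ u : ℝ, ∀ x : Icc (0:ℝ) ω,
        (f0' (0, x) - h (S u) (0, x) * f0 (0, x) +
          ∑ i : Fin 2, f0 (i, ageZero hω.le) * nfun nF nM i (S u) (0, x)) =
        ind 0 * deriv φ (x:ℝ) - h (S u) (0, x) * (ind 0 * φ (x:ℝ))
          + φ 0 * (ind 0 * nF (S u) x + ind 1 * nM (S u) x) := by
      intro u x
      simp only [hf0, hf0', nfun, Fin.sum_univ_two, ageZero,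
        show ((1:Fin 2) ≠ 0) from by decide, if_true, if_pos rfl, if_neg, ite_true, ite_false]
      norm_num
      ring
    have hW1 : ∀ u : ℝ, ∀ x : Icc (0:ℝ) ω,
        (f0' (1, x) - h (S u) (1, x) * f0 (1, x) +
          ∑ i : Fin 2, f0 (i, ageZero hω.le) * nfun nF nM i (S u) (1, x)) =
        ind 1 * deriv φ (x:ℝ) - h (S u) (1, x) * (ind 1 * φ (x:ℝ)) := by
      intro u x
      simp only [hf0, hf0', nfun, Fin.sum_univ_two, ageZero,
        show ((1:Fin 2) ≠ 0) from by decide, ite_true, ite_false, if_neg]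
      norm_num
    have hWm : ∀ u : ℝ, Measurable (fun s : SS ω => f0' s - h (S u) s * f0 s +
        ∑ i : Fin 2, f0 (i, ageZero hω.le) * nfun nF nM i (S u) s) := by
      intro u
      have h1 : Measurable (fun s : SS ω => f0' s - h (S u) s * f0 s) :=
        (hc'.measurable.sub ((hmeas (S u)).mul hc.measurable))
      refine h1.add ?_
      have hset : MeasurableSet {s : SS ω | s.1 = 0} :=
        measurable_fst (measurableSet_singleton (0 : Fin 2))
      have hnf : ∀ i : Fin 2, Measurable (fun s : SS ω => nfun nF nM i (S u) s) := by
        intro i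
        unfold nfun
        refine Measurable.ite hset ?_ measurable_const
        by_cases hi : i = 0
        · simp only [if_pos hi]
          exact (nFmeas (S u)).comp measurable_snd
        · simp only [if_neg hi]
          exact (nMmeas (S u)).comp measurable_snd
      exact Finset.measurable_sum _ (fun i _ => measurable_const.mul (hnf i))
    have hWb : ∀ u : ℝ, ∃ C : ℝ, ∀ s : SS ω, |f0' s - h (S u) s * f0 s +
        ∑ i : Fin 2, f0 (i, ageZero hω.le) * nfun nF nM i (S u) s| ≤ C := by
      intro u
      obtain ⟨Ch, hCh⟩ := hbdd (S u)
      obtain ⟨CnF, hCnF⟩ := nFbdd (S u)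
      obtain ⟨CnM, hCnM⟩ := nMbdd (S u)
      have hCh0 : 0 ≤ Ch := le_trans (hnonneg (S u) (0, ageZero hω.le)) (hCh _)
      have hCnF0 : 0 ≤ CnF := le_trans (nFnonneg (S u) (ageZero hω.le)) (hCnF _)
      have hCnM0 : 0 ≤ CnM := le_trans (nMnonneg (S u) (ageZero hω.le)) (hCnM _)
      refine ⟨I * Cφ' + Ch * (I * Cφ) + (I * |φ 0| * (CnF + CnM)), fun s => ?_⟩
      have habs_h : |h (S u) s| ≤ Ch := by
        rw [abs_of_nonneg (hnonneg (S u) s)]; exact hCh s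
      have hsum : |∑ i : Fin 2, f0 (i, ageZero hω.le) * nfun nF nM i (S u) s|
          ≤ I * |φ 0| * (CnF + CnM) := by
        rw [Fin.sum_univ_two]
        have e0 : f0 ((0 : Fin 2), ageZero hω.le) = ind 0 * φ 0 := by rw [hf0]; rfl
        have e1 : f0 ((1 : Fin 2), ageZero hω.le) = ind 1 * φ 0 := by rw [hf0]; rfl
        rw [e0, e1]
        have hb : ∀ i : Fin 2, |nfun nF nM i (S u) s| ≤ (if i = 0 then CnF else CnM) := by
          intro i
          unfold nfun
          by_cases hs : s.1 = 0 <;> by_cases hi : i = 0 <;>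
            simp only [hs, hi, ite_true, ite_false, if_pos, if_neg, abs_zero] <;>
            first
              | (rw [abs_of_nonneg (nFnonneg _ _)]; exact hCnF _)
              | (rw [abs_of_nonneg (nMnonneg _ _)]; exact hCnM _)
              | positivity
              | simp [hi]
        have hb0 := hb 0
        have hb1 := hb 1
        simp only [ite_true, ite_false, if_pos rfl, if_neg (show ((1:Fin 2) ≠ 0) from by decide)]
          at hb0 hb1
        calc |ind 0 * φ 0 * nfun nF nM 0 (S u) s + ind 1 * φ 0 * nfun nF nM 1 (S u) s|
            ≤ |ind 0 * φ 0 * nfun nF nM 0 (S u) s| + |ind 1 * φ 0 * nfun nF nM 1 (S u) s| :=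
              abs_add_le _ _
          _ = |ind 0| * |φ 0| * |nfun nF nM 0 (S u) s| + |ind 1| * |φ 0| * |nfun nF nM 1 (S u) s| := by
              rw [abs_mul, abs_mul, abs_mul, abs_mul]
          _ ≤ I * |φ 0| * CnF + I * |φ 0| * CnM := by
              have g0 : |ind 0| * |φ 0| * |nfun nF nM 0 (S u) s| ≤ I * |φ 0| * CnF := by
                exact mul_le_mul (mul_le_mul (hIabs 0) (le_refl |φ 0|) (abs_nonneg _) hI0) hb0
                  (abs_nonneg _) (by positivity)
              have g1 : |ind 1| * |φ 0| * |nfun nF nM 1 (S u) s| ≤ I * |φ 0| * CnM := by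
                exact mul_le_mul (mul_le_mul (hIabs 1) (le_refl |φ 0|) (abs_nonneg _) hI0) hb1
                  (abs_nonneg _) (by positivity)
              linarith
          _ = I * |φ 0| * (CnF + CnM) := by ring
      calc |f0' s - h (S u) s * f0 s + ∑ i : Fin 2, f0 (i, ageZero hω.le) * nfun nF nM i (S u) s|
          ≤ |f0' s - h (S u) s * f0 s| + |∑ i : Fin 2, f0 (i, ageZero hω.le) * nfun nF nM i (S u) s| :=
            abs_add_le _ _
        _ ≤ (|f0' s| + |h (S u) s * f0 s|) + |∑ i : Fin 2, f0 (i, ageZero hω.le) * nfun nF nM i (S u) s| := by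
            have := abs_sub (f0' s) (h (S u) s * f0 s)
            linarith
        _ ≤ I * Cφ' + Ch * (I * Cφ) + (I * |φ 0| * (CnF + CnM)) := by
            have h2 : |h (S u) s * f0 s| ≤ Ch * (I * Cφ) := by
              rw [abs_mul]
              exact mul_le_mul habs_h (hf0b s) (abs_nonneg _) hCh0
            linarith [hf0'b s, hsum]
    -- representation of the weak-equation integral
    set KA : ℝ → ℝ := fun u => ∫ v in (0:ℝ)..ω,
      (ind 0 * deriv φ v - h (S u) (0, pr v) * (ind 0 * φ v)
        + φ 0 * (ind 0 * nF (S u) (pr v) + ind 1 * nM (S u) (pr v))) * sF v u with hKA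
    set KB : ℝ → ℝ := fun u => ∫ v in (0:ℝ)..ω,
      (ind 1 * deriv φ v - h (S u) (1, pr v) * (ind 1 * φ v)) * sM v u with hKB
    have hKrep : ∀ u ∈ Icc (0:ℝ) T, (∫ s, (f0' s - h (S u) s * f0 s +
        ∑ i : Fin 2, f0 (i, ageZero hω.le) * nfun nF nM i (S u) s) ∂(S u)) = KA u + KB u := by
      intro u hu
      obtain ⟨Cu, hCu⟩ := hWb u
      rw [(hSint u hu _ (hWm u) Cu hCu).2, hKA, hKB]
      congr 1
      · refine intervalIntegral.integral_congr fun v hv => ?_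
        have hv' := hprmem v (hIccsub hv)
        rw [hW0 u (pr v), hv']
      · refine intervalIntegral.integral_congr fun v hv => ?_
        have hv' := hprmem v (hIccsub hv)
        rw [hW1 u (pr v), hv']
    -- representation of ∫ f0 dS t
    have hIf : ∀ t ∈ Icc (0:ℝ) T, (∫ s, f0 s ∂(S t)) =
        ∫ v in (0:ℝ)..ω, φ v * (ind 0 * sF v t + ind 1 * sM v t) := by
      intro t ht
      rw [(hSint t ht f0 hc.measurable (I * Cφ) hf0b).2]
      have i1 : IntervalIntegrable (fun v => f0 (0, pr v) * sF v t) volume 0 ω := by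
        refine II _ (ContinuousOn.mul ?_ (hsFsl t ht))
        exact (hc.comp (continuous_const.prodMk continuous_projIcc)).continuousOn
      have i2 : IntervalIntegrable (fun v => f0 (1, pr v) * sM v t) volume 0 ω := by
        refine II _ (ContinuousOn.mul ?_ (hsMsl t ht))
        exact (hc.comp (continuous_const.prodMk continuous_projIcc)).continuousOn
      rw [← intervalIntegral.integral_add i1 i2]
      refine intervalIntegral.integral_congr fun v hv => ?_
      have hv' := hprmem v (hIccsub hv)
      simp only [hf0, hv']
      ring
    -- continuity of KA and KB on [0, T]
    have hKAc : ContinuousOn KA (Icc 0 T) := by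
      rw [hKA]
      refine contOn_param hω _ ?_
      refine ContinuousOn.mul ?_ hsF_cont
      refine ContinuousOn.add (ContinuousOn.sub ?_ ?_) ?_
      · exact continuousOn_const.mul ((hφ'c.comp continuous_fst).continuousOn)
      · exact hFfc.mul (continuousOn_const.mul ((hφc.comp continuous_fst).continuousOn))
      · exact continuousOn_const.mul ((continuousOn_const.mul nFfc).add
          (continuousOn_const.mul nMfc))
    have hKBc : ContinuousOn KB (Icc 0 T) := by
      rw [hKB]
      refine contOn_param hω _ ?_
      refine ContinuousOn.mul (ContinuousOn.sub ?_ ?_) hsM_cont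
      · exact continuousOn_const.mul ((hφ'c.comp continuous_fst).continuousOn)
      · exact hMfc.mul (continuousOn_const.mul ((hφc.comp continuous_fst).continuousOn))
    have hKc : ContinuousOn (fun u => KA u + KB u) (Icc 0 T) := hKAc.add hKBc
    -- the primitive
    set P : ℝ → ℝ := fun t => (∫ s, f0 s ∂(S 0)) + ∫ u in (0:ℝ)..t, (KA u + KB u) with hP
    have hPeq : ∀ t ∈ Icc (0:ℝ) T,
        (∫ v in (0:ℝ)..ω, φ v * (ind 0 * sF v t + ind 1 * sM v t)) = P t := by
      intro t ht
      have hweak := (hSweak f0 f0' hc hc' had t ht).2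
      rw [← hIf t ht, hP, hweak]
      congr 1
      refine intervalIntegral.integral_congr fun u hu => ?_
      have huI : u ∈ Icc (0:ℝ) T := by
        have h1 : uIcc (0:ℝ) t ⊆ Icc 0 T := by
          rw [uIcc_of_le ht.1]
          exact Icc_subset_Icc le_rfl ht.2
        exact h1 hu
      exact hKrep u huI
    -- derivative of the primitive at t₀
    have hPd : HasDerivAt P (KA t₀ + KB t₀) t₀ := by
      rw [hP]
      refine HasDerivAt.const_add _ ?_
      refine intervalIntegral.integral_hasDerivAt_right ?_ ?_ ?_
      · refine ((hKc.mono ?_).intervalIntegrable)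
        rw [uIcc_of_le ht₀I.1]
        exact Icc_subset_Icc le_rfl ht₀I.2
      · exact ⟨Ioo 0 T, Ioo_mem_nhds ht₀.1 ht₀.2,
          (hKc.mono Ioo_subset_Icc_self).aestronglyMeasurable measurableSet_Ioo⟩
      · exact hKc.continuousAt (Icc_mem_nhds ht₀.1 ht₀.2)
    -- derivative of the density-side integral at t₀ (differentiation under the integral)
    have hdensd : HasDerivAt (fun t => ∫ v in (0:ℝ)..ω, φ v * (ind 0 * sF v t + ind 1 * sM v t))
        (∫ v in (0:ℝ)..ω, φ v * (ind 0 * sFt v t₀ + ind 1 * sMt v t₀)) t₀ := by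
      obtain ⟨Cb, hCb⟩ := (isCompact_Icc.prod isCompact_Icc).exists_bound_of_continuousOn
        (show ContinuousOn (fun p : ℝ × ℝ => φ p.1 * (ind 0 * sFt p.1 p.2 + ind 1 * sMt p.1 p.2))
            (Icc 0 ω ×ˢ Icc 0 T) from by
          refine ContinuousOn.mul ((hφc.comp continuous_fst).continuousOn) ?_
          refine ContinuousOn.add ?_ ?_
          · exact continuousOn_const.mul (hsFt_cont.congr (fun p _ => rfl))
          · exact continuousOn_const.mul (hsMt_cont.congr (fun p _ => rfl)))
      set ε : ℝ := min t₀ (T - t₀) with hε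
      have hεpos : 0 < ε := lt_min ht₀.1 (by linarith [ht₀.2])
      have hball : Metric.ball t₀ ε ⊆ Ioo 0 T := by
        intro x hx
        rw [Metric.mem_ball, Real.dist_eq, abs_lt] at hx
        constructor
        · have := min_le_left t₀ (T - t₀); simp only [hε] at hx; linarith [hx.1]
        · have := min_le_right t₀ (T - t₀); simp only [hε] at hx; linarith [hx.2]
      have key := intervalIntegral.hasDerivAt_integral_of_dominated_loc_of_deriv_le
        (F := fun t v => φ v * (ind 0 * sF v t + ind 1 * sM v t))
        (F' := fun t v => φ v * (ind 0 * sFt v t + ind 1 * sMt v t))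
        (a := 0) (b := ω) (μ := volume) (x₀ := t₀) (bound := fun _ => Cb)
        (s := Metric.ball t₀ ε) (Metric.ball_mem_nhds t₀ hεpos) ?_ ?_ ?_ ?_ ?_ ?_
      · exact key.2
      · -- measurability for t near t₀
        filter_upwards [Ioo_mem_nhds ht₀.1 ht₀.2] with x hx
        have hcont : ContinuousOn (fun v => φ v * (ind 0 * sF v x + ind 1 * sM v x)) (Icc 0 ω) := by
          refine ContinuousOn.mul (hφc.continuousOn) ?_
          refine ContinuousOn.add ?_ ?_
          · exact continuousOn_const.mul (hsFsl x (Ioo_subset_Icc_self hx))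
          · exact continuousOn_const.mul (hsMsl x (Ioo_subset_Icc_self hx))
        exact ((hcont.mono (by rw [uIoc_of_le hω.le]; exact Ioc_subset_Icc_self)).aestronglyMeasurable
          measurableSet_uIoc)
      · -- integrability at t₀
        refine II _ ?_
        refine ContinuousOn.mul (hφc.continuousOn) ?_
        refine ContinuousOn.add ?_ ?_
        · exact continuousOn_const.mul (hsFsl t₀ ht₀I)
        · exact continuousOn_const.mul (hsMsl t₀ ht₀I)
      · -- measurability of the derivative at t₀
        have hcont : ContinuousOn (fun v => φ v * (ind 0 * sFt v t₀ + ind 1 * sMt v t₀)) (Icc 0 ω) := by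
          refine ContinuousOn.mul (hφc.continuousOn) ?_
          refine ContinuousOn.add ?_ ?_
          · exact continuousOn_const.mul (hsFtsl t₀ ht₀I)
          · exact continuousOn_const.mul (hsMtsl t₀ ht₀I)
        exact ((hcont.mono (by rw [uIoc_of_le hω.le]; exact Ioc_subset_Icc_self)).aestronglyMeasurable
          measurableSet_uIoc)
      · -- the bound
        refine Filter.Eventually.of_forall fun v => fun hv x hx => ?_
        have hvI : v ∈ Icc (0:ℝ) ω := by
          rw [uIoc_of_le hω.le] at hv; exact Ioc_subset_Icc_self hv
        have hxI : x ∈ Icc (0:ℝ) T := Ioo_subset_Icc_self (hball hx)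
        exact hCb (v, x) (mk_mem_prod hvI hxI)
      · exact intervalIntegrable_const
      · -- differentiability in t on the ball
        refine Filter.Eventually.of_forall fun v => fun hv x hx => ?_
        have hvI : v ∈ Icc (0:ℝ) ω := by
          rw [uIoc_of_le hω.le] at hv; exact Ioc_subset_Icc_self hv
        have hxO : x ∈ Ioo (0:ℝ) T := hball hx
        have h1 : HasDerivAt (fun t => sF v t) (sFt v x) x :=
          (hsFt v hvI x (Ioo_subset_Icc_self hxO)).hasDerivAt (Icc_mem_nhds hxO.1 hxO.2)
        have h2 : HasDerivAt (fun t => sM v t) (sMt v x) x :=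
          (hsMt v hvI x (Ioo_subset_Icc_self hxO)).hasDerivAt (Icc_mem_nhds hxO.1 hxO.2)
        exact ((h1.const_mul (ind 0)).add (h2.const_mul (ind 1))).const_mul (φ v)
    -- identify the derivatives
    have heq : (fun t => ∫ v in (0:ℝ)..ω, φ v * (ind 0 * sF v t + ind 1 * sM v t)) =ᶠ[𝓝 t₀] P := by
      filter_upwards [Ioo_mem_nhds ht₀.1 ht₀.2] with x hx
      exact hPeq x (Ioo_subset_Icc_self hx)
    have hPd' : HasDerivAt (fun t => ∫ v in (0:ℝ)..ω, φ v * (ind 0 * sF v t + ind 1 * sM v t))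
        (KA t₀ + KB t₀) t₀ := hPd.congr_of_eventuallyEq heq
    exact hdensd.unique hPd'
  -- the rearranged ("starred") identities, after integration by parts
  have starF : ∀ t₀ ∈ Ioo (0:ℝ) T, ∀ φ : ℝ → ℝ, ContDiff ℝ 1 φ →
      (∫ v in (0:ℝ)..ω, φ v * (sFt v t₀ + sFv v t₀ + h (S t₀) (0, pr v) * sF v t₀)) =
        φ 0 * ((∫ v in (0:ℝ)..ω, nF (S t₀) (pr v) * sF v t₀) - sF 0 t₀) := by
    intro t₀ ht₀ φ hφ
    have ht₀I : t₀ ∈ Icc (0:ℝ) T := Ioo_subset_Icc_self ht₀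
    have hφc : Continuous φ := hφ.continuous
    have hφ'c : Continuous (deriv φ) := hφ.continuous_deriv le_rfl
    have hM0 := master ![1, 0] φ hφ t₀ ht₀
    simp only [Matrix.cons_val_zero, Matrix.cons_val_one, Matrix.head_cons, one_mul, zero_mul,
      mul_zero, add_zero, sub_zero, zero_add, zero_sub, neg_zero, intervalIntegral.integral_zero]
      at hM0
    -- integrability of the pieces
    have iE : IntervalIntegrable (fun v => deriv φ v * sF v t₀) volume 0 ω :=
      II _ (hφ'c.continuousOn.mul (hsFsl t₀ ht₀I))
    have iC : IntervalIntegrable (fun v => h (S t₀) (0, pr v) * φ v * sF v t₀) volume 0 ω :=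
      II _ (((hFsl t₀ ht₀I).mul hφc.continuousOn).mul (hsFsl t₀ ht₀I))
    have iD : IntervalIntegrable (fun v => nF (S t₀) (pr v) * sF v t₀) volume 0 ω :=
      II _ ((nFsl t₀ ht₀I).mul (hsFsl t₀ ht₀I))
    have iB : IntervalIntegrable (fun v => φ v * sFv v t₀) volume 0 ω :=
      II _ (hφc.continuousOn.mul (hsFvsl t₀ ht₀I))
    have iA : IntervalIntegrable (fun v => φ v * sFt v t₀) volume 0 ω :=
      II _ (hφc.continuousOn.mul (hsFtsl t₀ ht₀I))
    -- split the right-hand side of hM0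
    have hsplit : (∫ v in (0:ℝ)..ω,
        (deriv φ v - h (S t₀) (0, pr v) * φ v + φ 0 * nF (S t₀) (pr v)) * sF v t₀) =
        (∫ v in (0:ℝ)..ω, deriv φ v * sF v t₀)
          - (∫ v in (0:ℝ)..ω, h (S t₀) (0, pr v) * φ v * sF v t₀)
          + φ 0 * ∫ v in (0:ℝ)..ω, nF (S t₀) (pr v) * sF v t₀ := by
      rw [show (∫ v in (0:ℝ)..ω,
          (deriv φ v - h (S t₀) (0, pr v) * φ v + φ 0 * nF (S t₀) (pr v)) * sF v t₀) =
          ∫ v in (0:ℝ)..ω, ((deriv φ v * sF v t₀ - h (S t₀) (0, pr v) * φ v * sF v t₀)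
            + φ 0 * (nF (S t₀) (pr v) * sF v t₀)) from
        intervalIntegral.integral_congr fun v _ => by ring]
      rw [intervalIntegral.integral_add (iE.sub iC) (iD.const_mul (φ 0)),
        intervalIntegral.integral_sub iE iC, intervalIntegral.integral_const_mul]
    -- integration by parts
    have hibp : (∫ v in (0:ℝ)..ω, (deriv φ v * sF v t₀ + φ v * sFv v t₀)) =
        φ ω * sF ω t₀ - φ 0 * sF 0 t₀ := by
      apply intervalIntegral.integral_eq_sub_of_hasDeriv_right_of_le hω.le
      · exact hφc.continuousOn.mul (hsFsl t₀ ht₀I)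
      · intro x hx
        have h1 : HasDerivAt φ (deriv φ x) x := ((hφ.differentiable one_ne_zero) x).hasDerivAt
        have h2 : HasDerivAt (fun y => sF y t₀) (sFv x t₀) x :=
          (hsFv x (Ioo_subset_Icc_self hx) t₀ ht₀I).hasDerivAt (Icc_mem_nhds hx.1 hx.2)
        exact (h1.mul h2).hasDerivWithinAt
      · exact iE.add iB
    rw [intervalIntegral.integral_add iE iB, hsF_top t₀ ht₀I, mul_zero] at hibp
    -- split the left-hand side of the goal
    have hLHS : (∫ v in (0:ℝ)..ω, φ v * (sFt v t₀ + sFv v t₀ + h (S t₀) (0, pr v) * sF v t₀)) =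
        (∫ v in (0:ℝ)..ω, φ v * sFt v t₀) + (∫ v in (0:ℝ)..ω, φ v * sFv v t₀)
          + ∫ v in (0:ℝ)..ω, h (S t₀) (0, pr v) * φ v * sF v t₀ := by
      rw [show (∫ v in (0:ℝ)..ω, φ v * (sFt v t₀ + sFv v t₀ + h (S t₀) (0, pr v) * sF v t₀)) =
          ∫ v in (0:ℝ)..ω, ((φ v * sFt v t₀ + φ v * sFv v t₀)
            + h (S t₀) (0, pr v) * φ v * sF v t₀) from
        intervalIntegral.integral_congr fun v _ => by ring]
      rw [intervalIntegral.integral_add (iA.add iB) iC, intervalIntegral.integral_add iA iB]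
    rw [hLHS]
    rw [hsplit] at hM0
    linarith
  have starM : ∀ t₀ ∈ Ioo (0:ℝ) T, ∀ φ : ℝ → ℝ, ContDiff ℝ 1 φ →
      (∫ v in (0:ℝ)..ω, φ v * (sMt v t₀ + sMv v t₀ + h (S t₀) (1, pr v) * sM v t₀)) =
        φ 0 * ((∫ v in (0:ℝ)..ω, nM (S t₀) (pr v) * sF v t₀) - sM 0 t₀) := by
    intro t₀ ht₀ φ hφ
    have ht₀I : t₀ ∈ Icc (0:ℝ) T := Ioo_subset_Icc_self ht₀
    have hφc : Continuous φ := hφ.continuous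
    have hφ'c : Continuous (deriv φ) := hφ.continuous_deriv le_rfl
    have hM0 := master ![0, 1] φ hφ t₀ ht₀
    simp only [Matrix.cons_val_zero, Matrix.cons_val_one, Matrix.head_cons, one_mul, zero_mul,
      mul_zero, add_zero, sub_zero, zero_add, zero_sub, neg_zero, intervalIntegral.integral_zero]
      at hM0
    have iE : IntervalIntegrable (fun v => deriv φ v * sM v t₀) volume 0 ω :=
      II _ (hφ'c.continuousOn.mul (hsMsl t₀ ht₀I))
    have iC : IntervalIntegrable (fun v => h (S t₀) (1, pr v) * φ v * sM v t₀) volume 0 ω :=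
      II _ (((hMsl t₀ ht₀I).mul hφc.continuousOn).mul (hsMsl t₀ ht₀I))
    have iD : IntervalIntegrable (fun v => nM (S t₀) (pr v) * sF v t₀) volume 0 ω :=
      II _ ((nMsl t₀ ht₀I).mul (hsFsl t₀ ht₀I))
    have iB : IntervalIntegrable (fun v => φ v * sMv v t₀) volume 0 ω :=
      II _ (hφc.continuousOn.mul (hsMvsl t₀ ht₀I))
    have iA : IntervalIntegrable (fun v => φ v * sMt v t₀) volume 0 ω :=
      II _ (hφc.continuousOn.mul (hsMtsl t₀ ht₀I))
    have hsplit1 : (∫ v in (0:ℝ)..ω, φ 0 * nM (S t₀) (pr v) * sF v t₀) =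
        φ 0 * ∫ v in (0:ℝ)..ω, nM (S t₀) (pr v) * sF v t₀ := by
      rw [show (∫ v in (0:ℝ)..ω, φ 0 * nM (S t₀) (pr v) * sF v t₀) =
          ∫ v in (0:ℝ)..ω, φ 0 * (nM (S t₀) (pr v) * sF v t₀) from
        intervalIntegral.integral_congr fun v _ => by ring]
      rw [intervalIntegral.integral_const_mul]
    have hsplit2 : (∫ v in (0:ℝ)..ω, (deriv φ v - h (S t₀) (1, pr v) * φ v) * sM v t₀) =
        (∫ v in (0:ℝ)..ω, deriv φ v * sM v t₀)
          - ∫ v in (0:ℝ)..ω, h (S t₀) (1, pr v) * φ v * sM v t₀ := by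
      rw [show (∫ v in (0:ℝ)..ω, (deriv φ v - h (S t₀) (1, pr v) * φ v) * sM v t₀) =
          ∫ v in (0:ℝ)..ω, (deriv φ v * sM v t₀ - h (S t₀) (1, pr v) * φ v * sM v t₀) from
        intervalIntegral.integral_congr fun v _ => by ring]
      rw [intervalIntegral.integral_sub iE iC]
    have hibp : (∫ v in (0:ℝ)..ω, (deriv φ v * sM v t₀ + φ v * sMv v t₀)) =
        φ ω * sM ω t₀ - φ 0 * sM 0 t₀ := by
      apply intervalIntegral.integral_eq_sub_of_hasDeriv_right_of_le hω.le
      · exact hφc.continuousOn.mul (hsMsl t₀ ht₀I)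
      · intro x hx
        have h1 : HasDerivAt φ (deriv φ x) x := ((hφ.differentiable one_ne_zero) x).hasDerivAt
        have h2 : HasDerivAt (fun y => sM y t₀) (sMv x t₀) x :=
          (hsMv x (Ioo_subset_Icc_self hx) t₀ ht₀I).hasDerivAt (Icc_mem_nhds hx.1 hx.2)
        exact (h1.mul h2).hasDerivWithinAt
      · exact iE.add iB
    rw [intervalIntegral.integral_add iE iB, hsM_top t₀ ht₀I, mul_zero] at hibp
    have hLHS : (∫ v in (0:ℝ)..ω, φ v * (sMt v t₀ + sMv v t₀ + h (S t₀) (1, pr v) * sM v t₀)) =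
        (∫ v in (0:ℝ)..ω, φ v * sMt v t₀) + (∫ v in (0:ℝ)..ω, φ v * sMv v t₀)
          + ∫ v in (0:ℝ)..ω, h (S t₀) (1, pr v) * φ v * sM v t₀ := by
      rw [show (∫ v in (0:ℝ)..ω, φ v * (sMt v t₀ + sMv v t₀ + h (S t₀) (1, pr v) * sM v t₀)) =
          ∫ v in (0:ℝ)..ω, ((φ v * sMt v t₀ + φ v * sMv v t₀)
            + h (S t₀) (1, pr v) * φ v * sM v t₀) from
        intervalIntegral.integral_congr fun v _ => by ring]
      rw [intervalIntegral.integral_add (iA.add iB) iC, intervalIntegral.integral_add iA iB]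
    rw [hLHS]
    rw [hsplit1, hsplit2] at hM0
    linarith
  -- vanishing of the interior residual
  have vanF : ∀ t₀ ∈ Ioo (0:ℝ) T, ∀ v ∈ Ioo (0:ℝ) ω,
      sFt v t₀ + sFv v t₀ + h (S t₀) (0, pr v) * sF v t₀ = 0 := by
    intro t₀ ht₀
    have ht₀I : t₀ ∈ Icc (0:ℝ) T := Ioo_subset_Icc_self ht₀
    refine vanish_of_integral_smooth_eq_zero hω
      (fun v => sFt v t₀ + sFv v t₀ + h (S t₀) (0, pr v) * sF v t₀)
      (((hsFtsl t₀ ht₀I).add (hsFvsl t₀ ht₀I)).add ((hFsl t₀ ht₀I).mul (hsFsl t₀ ht₀I))) ?_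
    intro φ hφ hφpos hφsupp
    rw [starF t₀ ht₀ φ hφ]
    have hφ0 : φ 0 = 0 := by
      apply image_eq_zero_of_notMem_tsupport
      intro hc
      exact absurd (hφsupp hc).1 (lt_irrefl 0)
    rw [hφ0, zero_mul]
  have vanM : ∀ t₀ ∈ Ioo (0:ℝ) T, ∀ v ∈ Ioo (0:ℝ) ω,
      sMt v t₀ + sMv v t₀ + h (S t₀) (1, pr v) * sM v t₀ = 0 := by
    intro t₀ ht₀
    have ht₀I : t₀ ∈ Icc (0:ℝ) T := Ioo_subset_Icc_self ht₀
    refine vanish_of_integral_smooth_eq_zero hω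
      (fun v => sMt v t₀ + sMv v t₀ + h (S t₀) (1, pr v) * sM v t₀)
      (((hsMtsl t₀ ht₀I).add (hsMvsl t₀ ht₀I)).add ((hMsl t₀ ht₀I).mul (hsMsl t₀ ht₀I))) ?_
    intro φ hφ hφpos hφsupp
    rw [starM t₀ ht₀ φ hφ]
    have hφ0 : φ 0 = 0 := by
      apply image_eq_zero_of_notMem_tsupport
      intro hc
      exact absurd (hφsupp hc).1 (lt_irrefl 0)
    rw [hφ0, zero_mul]
  -- a.e. vanishing integral helper for the boundary conditions
  have bdy : ∀ (A : ℝ → ℝ), (∀ v ∈ Ioo (0:ℝ) ω, A v = 0) →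
      (∫ v in (0:ℝ)..ω, (1:ℝ) * A v) = 0 := by
    intro A hA
    rw [intervalIntegral.integral_of_le hω.le]
    refine integral_eq_zero_of_ae ?_
    have hae : ∀ᵐ v ∂(volume.restrict (Ioc (0:ℝ) ω)), v ∈ Ioc (0:ℝ) ω :=
      ae_restrict_mem measurableSet_Ioc
    have hne : ∀ᵐ v ∂(volume.restrict (Ioc (0:ℝ) ω)), v ≠ ω := by
      refine ae_restrict_of_ae ?_
      have hs : {v : ℝ | ¬ v ≠ ω} = {ω} := by ext x; simp
      rw [ae_iff, hs]
      exact measure_singleton ω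
    filter_upwards [hae, hne] with v hv1 hv2
    have hvo : v ∈ Ioo (0:ℝ) ω := ⟨hv1.1, lt_of_le_of_ne hv1.2 hv2⟩
    show (1:ℝ) * A v = 0
    rw [hA v hvo, mul_zero]
  refine ⟨fun v hv t ht => ⟨?_, ?_⟩, fun t ht => ⟨?_, ?_⟩⟩
  · have := vanF t ht v hv
    linear_combination this
  · have := vanM t ht v hv
    linear_combination this
  · have h1 := starF t ht (fun _ => (1:ℝ)) contDiff_const
    have h2 := bdy (fun v => sFt v t + sFv v t + h (S t) (0, pr v) * sF v t) (vanF t ht)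
    simp only [one_mul] at h1 h2
    rw [h2] at h1
    linarith
  · have h1 := starM t ht (fun _ => (1:ℝ)) contDiff_const
    have h2 := bdy (fun v => sMt v t + sMv v t + h (S t) (1, pr v) * sM v t) (vanM t ht)
    simp only [one_mul] at h1 h2
    rw [h2] at h1
    linarith

end TwoSex
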